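/- The function λ* is differentiable on [√(2/π), ∞) and satisfies 1 ≤ λ*'(x) ≤ 20 for every x ≥ √(2/π), where λ*(x) is the unique λ ≥ 0 with λ + φ'(λ) = x. -/

import Mathlib

open MeasureTheory ProbabilityTheory

noncomputable def gaussMatrix (n : ℕ) : Measure (Fin n → Fin n → ℝ) :=
  Measure.pi fun _ => Measure.pi fun _ => gaussianReal 0 1

noncomputable def gaussVec (n : ℕ) : Measure (Fin n → ℝ) :=
  Measure.pi fun _ => gaussianReal 0 1

/-- The symmetric, zero-diagonal coupling matrix built from the i.i.d. upper-triangular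
standard Gaussians. -/
def Wmat {n : ℕ} (ω : Fin n → Fin n → ℝ) (i j : Fin n) : ℝ :=
  if i < j then ω i j else if j < i then ω j i else 0

/-- The Sherrington--Kirkpatrick Hamiltonian `H(σ) = ∑_{i<j} σ_i σ_j W_{ij}`. -/
noncomputable def Ham {n : ℕ} (σ : Fin n → ℝ) (ω : Fin n → Fin n → ℝ) : ℝ :=
  ∑ i : Fin n, ∑ j : Fin n, if i < j then σ i * σ j * Wmat ω i j else 0

/-- `σ` with its `i`-th spin flipped. -/
def flipSpin {n : ℕ} (σ : Fin n → ℝ) (i : Fin n) : Fin n → ℝ :=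
  Function.update σ i (-(σ i))

/-- `σ` is locally optimal if no single spin flip decreases the energy. -/
def IsLocalOpt {n : ℕ} (σ : Fin n → ℝ) (ω : Fin n → Fin n → ℝ) : Prop :=
  ∀ i : Fin n, Ham σ ω ≤ Ham (flipSpin σ i) ω

/-- `σ ∈ {−1,+1}^n`. -/
def IsSpin {n : ℕ} (σ : Fin n → ℝ) : Prop := ∀ i, σ i = 1 ∨ σ i = -1

/-- `‖x‖₁ = ∑ |x i|`. -/
def l1 {n : ℕ} (ω : Fin n → ℝ) : ℝ := ∑ i, |ω i|

/-- The standard normal cumulative distribution function `Φ`. -/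
noncomputable def normCdf (t : ℝ) : ℝ :=
  ∫ x in Set.Iic t, (Real.sqrt (2 * Real.pi))⁻¹ * Real.exp (-x ^ 2 / 2)

/-- `φ(λ) = log (2 Φ(λ))`. -/
noncomputable def phiFn (l : ℝ) : ℝ := Real.log (2 * normCdf l)

/-- The Fenchel–Légendre transform `μ*(x) = sup_{λ ≥ 0} (λ x − λ²/2 − φ(λ))`. -/
noncomputable def muStar (x : ℝ) : ℝ :=
  ⨆ l : {l : ℝ // 0 ≤ l}, ((l : ℝ) * x - (l : ℝ) ^ 2 / 2 - phiFn l)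

/-- `R(x) = x²/4 − μ*(x)`. -/
noncomputable def Rfun (x : ℝ) : ℝ := x ^ 2 / 4 - muStar x


open MeasureTheory Real Set Topology Filter

noncomputable def gpdf (t : ℝ) : ℝ := (Real.sqrt (2 * Real.pi))⁻¹ * Real.exp (-t ^ 2 / 2)

lemma gpdf_pos (t : ℝ) : 0 < gpdf t := by
  unfold gpdf; positivity

lemma gpdf_cont : Continuous gpdf := by
  unfold gpdf; continuity

lemma gpdf_integrable : Integrable gpdf := by
  have h : Integrable (fun x : ℝ => Real.exp (-(1/2) * x ^ 2)) := integrable_exp_neg_mul_sq (by norm_num)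
  have := h.const_mul (Real.sqrt (2 * Real.pi))⁻¹
  convert this using 2 with x
  unfold gpdf; ring_nf

lemma integral_gpdf : ∫ t, gpdf t = 1 := by
  unfold gpdf
  rw [MeasureTheory.integral_const_mul]
  have : (fun x : ℝ => Real.exp (-x ^ 2 / 2)) = fun x : ℝ => Real.exp (-(1/2) * x ^ 2) := by
    ext x; ring_nf
  rw [this, integral_gaussian]
  rw [show Real.pi / (1/2) = 2 * Real.pi by ring]
  rw [inv_mul_cancel₀ (by positivity)]

lemma normCdf_eq (t : ℝ) : normCdf t = ∫ x in Set.Iic t, gpdf x := rfl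

lemma normCdf_sub (a b : ℝ) : normCdf b - normCdf a = ∫ x in a..b, gpdf x := by
  rw [normCdf_eq, normCdf_eq]
  exact intervalIntegral.integral_Iic_sub_Iic gpdf_integrable.integrableOn gpdf_integrable.integrableOn

lemma hasDerivAt_normCdf (t : ℝ) : HasDerivAt normCdf (gpdf t) t := by
  have h : HasDerivAt (fun u => ∫ x in (0:ℝ)..u, gpdf x) (gpdf t) t := by
    refine intervalIntegral.integral_hasDerivAt_right
      (gpdf_integrable.intervalIntegrable) ?_ gpdf_cont.continuousAt
    exact gpdf_cont.aestronglyMeasurable.stronglyMeasurableAtFilter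
  have he : normCdf = fun u => normCdf 0 + ∫ x in (0:ℝ)..u, gpdf x := by
    ext u
    rw [← normCdf_sub]; ring
  rw [he]
  simpa using (h.const_add (normCdf 0))

lemma normCdf_pos (t : ℝ) : 0 < normCdf t := by
  rw [normCdf_eq]
  rw [MeasureTheory.setIntegral_pos_iff_support_of_nonneg_ae
    (Filter.Eventually.of_forall fun x => (gpdf_pos x).le) gpdf_integrable.integrableOn]
  have : Function.support gpdf = Set.univ := by
    ext x; simp [Function.mem_support, (gpdf_pos x).ne']
  rw [this]
  simp

lemma normCdf_zero : normCdf 0 = 1/2 := by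
  have hsym : (∫ x in Set.Iic (0:ℝ), gpdf x) = ∫ x in Set.Ioi (0:ℝ), gpdf x := by
    rw [show ((0:ℝ)) = -0 by ring, ← integral_comp_neg_Iic]
    simp only [neg_zero]
    refine setIntegral_congr_fun measurableSet_Iic (fun x _ => ?_)
    unfold gpdf; ring_nf
  have hsplit : (∫ x in Set.Iic (0:ℝ), gpdf x) + (∫ x in Set.Ioi (0:ℝ), gpdf x) = 1 := by
    rw [intervalIntegral.integral_Iic_add_Ioi gpdf_integrable.integrableOn gpdf_integrable.integrableOn]
    exact integral_gpdf
  rw [normCdf_eq]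
  rw [hsym] at hsplit ⊢
  linarith

lemma half_le_normCdf {t : ℝ} (ht : 0 ≤ t) : 1/2 ≤ normCdf t := by
  have h := normCdf_sub 0 t
  rw [normCdf_zero] at h
  have : 0 ≤ ∫ x in (0:ℝ)..t, gpdf x :=
    intervalIntegral.integral_nonneg ht (fun x _ => (gpdf_pos x).le)
  linarith

/-- `r t = gpdf t / normCdf t`, the reversed hazard rate. -/
noncomputable def rfn (t : ℝ) : ℝ := gpdf t / normCdf t

lemma rfn_pos (t : ℝ) : 0 < rfn t := div_pos (gpdf_pos t) (normCdf_pos t)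

lemma hasDerivAt_phiFn (t : ℝ) : HasDerivAt phiFn (rfn t) t := by
  have h2 : HasDerivAt (fun l => 2 * normCdf l) (2 * gpdf t) t :=
    (hasDerivAt_normCdf t).const_mul 2
  have hne : 2 * normCdf t ≠ 0 := by have := normCdf_pos t; positivity
  have := h2.log hne
  have heq : 2 * gpdf t / (2 * normCdf t) = rfn t := by
    rw [rfn]; rw [mul_div_mul_left _ _ (two_ne_zero)]
  rw [heq] at this
  exact this

lemma deriv_phiFn (t : ℝ) : deriv phiFn t = rfn t := (hasDerivAt_phiFn t).deriv

lemma hasDerivAt_gpdf (t : ℝ) : HasDerivAt gpdf (-t * gpdf t) t := by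
  have h1 : HasDerivAt (fun x : ℝ => -x ^ 2 / 2) (-t) t := by
    have : HasDerivAt (fun x : ℝ => -x ^ 2 / 2) (-(2 * t ^ 1) / 2) t := by
      exact (((hasDerivAt_pow 2 t).neg).div_const 2)
    convert this using 1; ring
  have h2 := (h1.exp).const_mul (Real.sqrt (2 * Real.pi))⁻¹
  unfold gpdf
  exact h2.congr_deriv (by ring)

lemma hasDerivAt_rfn (t : ℝ) :
    HasDerivAt rfn (-(t * rfn t) - rfn t ^ 2) t := by
  have h := (hasDerivAt_gpdf t).div (hasDerivAt_normCdf t) (normCdf_pos t).ne'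
  have heq : (-t * gpdf t * normCdf t - gpdf t * gpdf t) / normCdf t ^ 2
      = -(t * rfn t) - rfn t ^ 2 := by
    have hc := (normCdf_pos t).ne'
    rw [rfn]
    field_simp
  rw [heq] at h
  exact h

/-- `G l = l + φ'(l)`. -/
noncomputable def Gfn (l : ℝ) : ℝ := l + rfn l

lemma hasDerivAt_Gfn (t : ℝ) :
    HasDerivAt Gfn (1 - (t * rfn t + rfn t ^ 2)) t := by
  have h := (hasDerivAt_id t).add (hasDerivAt_rfn t)
  have : Gfn = fun l => l + rfn l := rfl
  rw [this]
  exact h.congr_deriv (by ring)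

lemma poly_ineq (t : ℝ) (ht : 0 ≤ t) :
    0.7982 * t * (1+t^2/2+t^4/16) + 0.63713 ≤ 0.95 * (1+t^2/2+t^4/16)^2 := by
  nlinarith [sq_nonneg t, sq_nonneg (t-1), sq_nonneg (t^2-1), sq_nonneg (t-1/2),
    mul_nonneg ht (sq_nonneg (t-1)), mul_nonneg (mul_nonneg ht ht) (sq_nonneg (t-1)),
    sq_nonneg (t^2-t), mul_nonneg ht (sq_nonneg (t^2-1))]

lemma sqrt_two_pi_ge : (2.506 : ℝ) ≤ Real.sqrt (2 * Real.pi) := by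
  rw [show (2.506:ℝ) = Real.sqrt (2.506^2) by rw [Real.sqrt_sq (by norm_num)]]
  apply Real.sqrt_le_sqrt
  nlinarith [Real.pi_gt_d6]

lemma gpdf_le (t : ℝ) : gpdf t ≤ 0.3991 * Real.exp (-t^2/2) := by
  unfold gpdf
  have h1 : (Real.sqrt (2 * Real.pi))⁻¹ ≤ 0.3991 := by
    rw [inv_le_comm₀ (by positivity) (by norm_num)]
    calc (0.3991:ℝ)⁻¹ ≤ 2.506 := by norm_num
    _ ≤ Real.sqrt (2 * Real.pi) := sqrt_two_pi_ge
  exact mul_le_mul_of_nonneg_right h1 (Real.exp_nonneg _)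

lemma exp_ge_quad {x : ℝ} (hx : 0 ≤ x) : 1 + x + x^2/4 ≤ Real.exp x := by
  have h := Real.add_one_le_exp (x/2)
  have h0 : (0:ℝ) ≤ 1 + x/2 := by linarith
  have hsq : (1 + x/2)^2 ≤ (Real.exp (x/2))^2 := by
    apply pow_le_pow_left₀ h0; linarith
  have : (Real.exp (x/2))^2 = Real.exp x := by
    rw [sq, ← Real.exp_add]; norm_num
  nlinarith

lemma exp_neg_le {t : ℝ} : Real.exp (-t^2/2) ≤ 1 / (1 + t^2/2 + t^4/16) := by
  have hQ : (0:ℝ) < 1 + t^2/2 + t^4/16 := by positivity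
  have h : 1 + t^2/2 + t^4/16 ≤ Real.exp (t^2/2) := by
    have := exp_ge_quad (x := t^2/2) (by positivity)
    convert this using 2
    ring
  rw [show -t^2/2 = -(t^2/2) by ring, Real.exp_neg]
  rw [inv_eq_one_div]
  apply div_le_div_of_nonneg_left (by norm_num) hQ h

lemma key_ineq {t : ℝ} (ht : 0 ≤ t) : t * rfn t + rfn t ^ 2 ≤ 19/20 := by
  have hr2 : rfn t ≤ 2 * gpdf t := by
    rw [rfn]
    rw [div_le_iff₀ (normCdf_pos t)]
    nlinarith [half_le_normCdf ht, gpdf_pos t]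
  have hrpos := (rfn_pos t).le
  have hgle := gpdf_le t
  have hgpos := (gpdf_pos t).le
  have hupos : (0:ℝ) < Real.exp (-t^2/2) := Real.exp_pos _
  set Q : ℝ := 1 + t^2/2 + t^4/16 with hQdef
  have hQ : (0:ℝ) < Q := by rw [hQdef]; positivity
  have hu : Real.exp (-t^2/2) ≤ 1 / Q := exp_neg_le
  have hg : gpdf t ≤ 0.3991 / Q := by
    calc gpdf t ≤ 0.3991 * Real.exp (-t^2/2) := hgle
    _ ≤ 0.3991 * (1 / Q) := by nlinarith
    _ = 0.3991 / Q := by ring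
  have hpoly : 0.7982 * t * Q + 0.63713 ≤ 0.95 * Q^2 := by
    rw [hQdef]; exact poly_ineq t ht
  have h1 : t * rfn t + rfn t ^ 2 ≤ 2 * t * gpdf t + 4 * gpdf t ^ 2 := by
    nlinarith [mul_le_mul_of_nonneg_left hr2 ht]
  have ha : 2 * t * gpdf t ≤ 0.7982 * t / Q := by
    have := mul_le_mul_of_nonneg_left hg (by linarith : (0:ℝ) ≤ 2 * t)
    calc 2 * t * gpdf t ≤ 2 * t * (0.3991 / Q) := this
    _ = 0.7982 * t / Q := by ring
  have hb : 4 * gpdf t ^ 2 ≤ 0.63713 / Q^2 := by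
    have hsq : gpdf t ^ 2 ≤ (0.3991 / Q)^2 := by
      apply pow_le_pow_left₀ hgpos hg
    rw [div_pow] at hsq
    have h4 : (4:ℝ) * (0.3991^2 / Q^2) ≤ 0.63713 / Q^2 := by
      rw [mul_div_assoc']
      apply div_le_div_of_nonneg_right ?_ (by positivity)
      norm_num
    linarith
  have h3 : 0.7982 * t / Q + 0.63713 / Q^2 ≤ 19/20 := by
    rw [div_add_div _ _ hQ.ne' (by positivity : (Q:ℝ)^2 ≠ 0), div_le_iff₀ (by positivity)]
    nlinarith [mul_le_mul_of_nonneg_right hpoly hQ.le, sq_nonneg Q, mul_pos hQ hQ]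
  linarith

lemma Gfn_cont : Continuous Gfn :=
  continuous_iff_continuousAt.mpr fun t => (hasDerivAt_Gfn t).continuousAt

lemma Gfn_slope_bounds {a b : ℝ} (ha : 0 ≤ a) (hab : a < b) :
    (1/20) * (b - a) ≤ Gfn b - Gfn a ∧ Gfn b - Gfn a ≤ b - a := by
  obtain ⟨c, hc, hceq⟩ := exists_hasDerivAt_eq_slope Gfn
    (fun t => 1 - (t * rfn t + rfn t ^ 2)) hab
    (Gfn_cont.continuousOn) (fun x _ => hasDerivAt_Gfn x)
  have hc0 : 0 ≤ c := le_trans ha hc.1.le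
  have h1 := key_ineq hc0
  have h2 : 0 ≤ c * rfn c + rfn c ^ 2 := by
    have := (rfn_pos c).le
    nlinarith
  have hba : 0 < b - a := by linarith
  have := hceq
  rw [eq_div_iff hba.ne'] at this
  constructor <;> nlinarith

lemma lstar_lip {lstar : ℝ → ℝ}
    (hdef : ∀ x, Real.sqrt (2 / Real.pi) ≤ x → 0 ≤ lstar x ∧ Gfn (lstar x) = x)
    {x y : ℝ} (hx : Real.sqrt (2 / Real.pi) ≤ x) (hy : Real.sqrt (2 / Real.pi) ≤ y) :
    |lstar y - lstar x| ≤ 20 * |y - x| := by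
  obtain ⟨hx0, hxG⟩ := hdef x hx
  obtain ⟨hy0, hyG⟩ := hdef y hy
  rcases lt_trichotomy (lstar x) (lstar y) with h | h | h
  · obtain ⟨h1, _⟩ := Gfn_slope_bounds hx0 h
    rw [hxG, hyG] at h1
    rw [abs_of_pos (by linarith), abs_of_pos (by linarith)]
    linarith
  · simp [h]
  · obtain ⟨h1, _⟩ := Gfn_slope_bounds hy0 h
    rw [hxG, hyG] at h1
    rw [abs_of_neg (by linarith), abs_of_neg (by linarith)]
    linarith

theorem stmt16 (lstar : ℝ → ℝ)
    (hdef : ∀ x, Real.sqrt (2 / Real.pi) ≤ x →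
      0 ≤ lstar x ∧ lstar x + deriv phiFn (lstar x) = x) :
    ∀ x, Real.sqrt (2 / Real.pi) ≤ x →
      DifferentiableWithinAt ℝ lstar (Set.Ici (Real.sqrt (2 / Real.pi))) x ∧
      1 ≤ derivWithin lstar (Set.Ici (Real.sqrt (2 / Real.pi))) x ∧
      derivWithin lstar (Set.Ici (Real.sqrt (2 / Real.pi))) x ≤ 20 := by
  have hdef' : ∀ x, Real.sqrt (2 / Real.pi) ≤ x → 0 ≤ lstar x ∧ Gfn (lstar x) = x := by
    intro x hx
    obtain ⟨h0, h1⟩ := hdef x hx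
    refine ⟨h0, ?_⟩
    rw [Gfn, ← deriv_phiFn]
    exact h1
  intro x hx
  set x0 := Real.sqrt (2 / Real.pi) with hx0def
  obtain ⟨ha0, hGa⟩ := hdef' x hx
  set a := lstar x with hadef
  set g' : ℝ := 1 - (a * rfn a + rfn a ^ 2) with hg'def
  have hkey := key_ineq ha0
  have hq0 : 0 ≤ a * rfn a + rfn a ^ 2 := by
    have := (rfn_pos a).le
    nlinarith
  have hg'pos : 0 < g' := by rw [hg'def]; linarith
  have hg'le : g' ≤ 1 := by rw [hg'def]; linarith
  have hg'ge : 1/20 ≤ g' := by rw [hg'def]; linarith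
  -- continuity of lstar within
  have hmem : Set.Ici x0 \ {x} ∈ 𝓝[Set.Ici x0 \ {x}] x := self_mem_nhdsWithin
  have hcont : Filter.Tendsto lstar (𝓝[Set.Ici x0 \ {x}] x) (𝓝 a) := by
    rw [tendsto_iff_dist_tendsto_zero]
    have hg : Filter.Tendsto (fun y : ℝ => 20 * |y - x|) (𝓝[Set.Ici x0 \ {x}] x) (𝓝 0) := by
      have h0 : Filter.Tendsto (fun y : ℝ => y - x) (𝓝 x) (𝓝 (x - x)) :=
        (continuous_id.sub continuous_const).tendsto x
      rw [sub_self] at h0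
      have h1 : Filter.Tendsto (fun y : ℝ => 20 * |y - x|) (𝓝 x) (𝓝 0) := by
        simpa using (h0.abs.const_mul 20)
      exact h1.mono_left nhdsWithin_le_nhds
    refine squeeze_zero' (Filter.Eventually.of_forall fun y => dist_nonneg) ?_ hg
    filter_upwards [hmem] with y hy
    rw [Real.dist_eq]
    exact lstar_lip hdef' hx hy.1
  have hne : ∀ᶠ y in 𝓝[Set.Ici x0 \ {x}] x, lstar y ∈ ({a}ᶜ : Set ℝ) := by
    filter_upwards [hmem] with y hy
    intro hcontra
    apply hy.2
    have hyG := (hdef' y hy.1).2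
    simp only [Set.mem_singleton_iff] at hcontra
    rw [hcontra, hGa] at hyG
    exact hyG.symm
  have hcont' : Filter.Tendsto lstar (𝓝[Set.Ici x0 \ {x}] x) (𝓝[≠] a) :=
    tendsto_nhdsWithin_iff.mpr ⟨hcont, hne⟩
  have hslopeG : Filter.Tendsto (slope Gfn a) (𝓝[≠] a) (𝓝 g') :=
    hasDerivAt_iff_tendsto_slope.mp (by simpa [hg'def] using hasDerivAt_Gfn a)
  have htend : Filter.Tendsto (fun y => (slope Gfn a (lstar y))⁻¹)
      (𝓝[Set.Ici x0 \ {x}] x) (𝓝 g'⁻¹) :=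
    (hslopeG.comp hcont').inv₀ hg'pos.ne'
  have heq : ∀ y ∈ Set.Ici x0 \ {x}, slope lstar x y = (slope Gfn a (lstar y))⁻¹ := by
    intro y hy
    have hyG := (hdef' y hy.1).2
    rw [slope_def_field, slope_def_field, hyG, hGa, ← hadef, inv_div]
  have hd : HasDerivWithinAt lstar g'⁻¹ (Set.Ici x0) x := by
    rw [hasDerivWithinAt_iff_tendsto_slope]
    apply htend.congr'
    filter_upwards [hmem] with y hy
    exact (heq y hy).symm
  have hderiv : derivWithin lstar (Set.Ici x0) x = g'⁻¹ :=
    hd.derivWithin (uniqueDiffOn_Ici x0 x hx)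
  refine ⟨hd.differentiableWithinAt, ?_, ?_⟩
  · rw [hderiv]
    rw [le_inv_comm₀ one_pos hg'pos]
    simpa using hg'le
  · rw [hderiv]
    calc g'⁻¹ ≤ (1/20 : ℝ)⁻¹ := by
          apply inv_anti₀ (by norm_num) hg'ge
    _ = 20 := by norm_num
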